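/- arXiv:2311.10276 — 3 statements merged into one kernel-verified Lean document; each statement's English description precedes it below -/
import Mathlib

section
/- For partitions λ and α of the same natural number n, the Kostka number K_{λ,α} (the number of semistandard Young tableaux of shape λ and content α) is positive if and only if λ dominates α, i.e. λ_1 + ⋯ + λ_i ≥ α_1 + ⋯ + α_i for all i. -/
/-- A partition: a weakly decreasing list of positive integers. -/
def IsPartition (l : List ℕ) : Prop :=
  l.Pairwise (· ≥ ·) ∧ ∀ x ∈ l, 0 < x

/-- Dominance order: `l` dominates `m` (all partial sums of `l` are at least those of `m`). -/
def Dominates (l m : List ℕ) : Prop :=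
  ∀ i, (m.take i).sum ≤ (l.take i).sum

/-- A semistandard Young tableau of shape `l`, given as its list of rows:
rows weakly increase, columns strictly increase. -/
def IsSSYT (l : List ℕ) (T : List (List ℕ)) : Prop :=
  T.map List.length = l ∧
  (∀ r ∈ T, r.Pairwise (· ≤ ·)) ∧
  ∀ i j, j < (T.getD (i+1) []).length →
    (T.getD i []).getD j 0 < (T.getD (i+1) []).getD j 0

/-- The number of entries of the tableau `T` equal to `v`. -/
def contentCount (T : List (List ℕ)) (v : ℕ) : ℕ :=
  (T.map fun r => r.count v).sum

/-- `T` has content `a` (a vector of multiplicities indexed by `Fin k`). -/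
def hasContent (k : ℕ) (T : List (List ℕ)) (a : Fin k → ℕ) : Prop :=
  ∀ v : ℕ, contentCount T v = if h : v < k then a ⟨v, h⟩ else 0

/-- The weakly decreasing rearrangement of a list of naturals. -/
def sortDesc (l : List ℕ) : List ℕ :=
  ((l : Multiset ℕ).sort (· ≤ ·)).reverse

/-- The Kostka number with content given by a list `a`
(the number of entries equal to `v` is `a.getD v 0`). -/
noncomputable def kostkaL (l a : List ℕ) : ℕ :=
  Nat.card {T : List (List ℕ) // IsSSYT l T ∧ ∀ v : ℕ, contentCount T v = a.getD v 0}


namespace Kostka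

lemma sum_take_eq (L : List ℕ) (i : ℕ) :
    (L.take i).sum = ∑ j ∈ Finset.range i, L.getD j 0 := by
  induction i with
  | zero => simp
  | succ i ih =>
    rw [Finset.sum_range_succ, ← ih]
    rcases lt_or_ge i L.length with h | h
    · rw [List.sum_take_succ L i h, List.getD_eq_getElem?_getD, List.getElem?_eq_getElem h]
      rfl
    · rw [List.take_of_length_le h, List.take_of_length_le (le_trans h (Nat.le_succ i)),
        List.getD_eq_getElem?_getD, List.getElem?_eq_none h]
      simp

lemma sum_map_range (f : ℕ → ℕ) (n : ℕ) :
    ((List.range n).map f).sum = ∑ i ∈ Finset.range n, f i := by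
  induction n with
  | zero => simp
  | succ n ih => rw [List.range_succ, Finset.sum_range_succ, ← ih]; simp

lemma getD_anti {L : List ℕ} (h : L.Pairwise (· ≥ ·)) {i j : ℕ} (hij : i ≤ j) :
    L.getD j 0 ≤ L.getD i 0 := by
  rcases lt_or_ge j L.length with hj | hj
  · have hi : i < L.length := lt_of_le_of_lt hij hj
    rcases eq_or_lt_of_le hij with rfl | hlt
    · rfl
    · have := h.rel_get_of_lt (a := ⟨i, hi⟩) (b := ⟨j, hj⟩) hlt
      simpa [List.getD_eq_getElem?_getD, List.getElem?_eq_getElem, hi, hj] using this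
  · simp [List.getD_eq_getElem?_getD, List.getElem?_eq_none hj]

lemma take_sum_succ {L : List ℕ} {v : ℕ} :
    (L.take (v+1)).sum = (L.take v).sum + L.getD v 0 := by
  rw [sum_take_eq, sum_take_eq, Finset.sum_range_succ]

lemma getD_pos_lt {L : List ℕ} {v : ℕ} (h : 0 < L.getD v 0) : v < L.length := by
  by_contra hc
  rw [List.getD_eq_getElem?_getD, List.getElem?_eq_none (le_of_not_gt hc)] at h
  simp at h


lemma anti_of_succ {f : ℕ → ℕ} (hdec : ∀ i, f (i+1) ≤ f i) {i j : ℕ} (h : i ≤ j) :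
    f j ≤ f i := by
  induction j with
  | zero => have : i = 0 := by omega
            subst this; exact le_rfl
  | succ j ih =>
    rcases Nat.lt_or_ge i (j+1) with hh | hh
    · exact le_trans (hdec j) (ih (by omega))
    · have : i = j+1 := by omega
      subst this; exact le_rfl

/-! ### The strip operation -/

def stripF (s : ℕ) (f : ℕ → ℕ) : ℕ → ℕ :=
  fun i => f i - min s (f i) + min s (f (i+1))

section stripLemmas

variable {s : ℕ} {f : ℕ → ℕ} (hf : ∀ i, f (i+1) ≤ f i)
include hf

lemma stripF_le (i : ℕ) : stripF s f i ≤ f i := by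
  have := hf i; unfold stripF; omega

lemma stripF_ge_next (i : ℕ) : f (i+1) ≤ stripF s f i := by
  have := hf i; unfold stripF; omega

lemma stripF_anti (i : ℕ) : stripF s f (i+1) ≤ stripF s f i :=
  le_trans (stripF_le hf (i+1)) (stripF_ge_next hf i)

omit hf in
lemma stripF_sum (i : ℕ) :
    ∑ j ∈ Finset.range i, stripF s f j + min s (f 0) =
      ∑ j ∈ Finset.range i, f j + min s (f i) := by
  induction i with
  | zero => simp
  | succ i ih =>
    rw [Finset.sum_range_succ, Finset.sum_range_succ (f := f)]
    have h1 : stripF s f i = f i - min s (f i) + min s (f (i+1)) := rfl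
    omega

end stripLemmas

end Kostka

namespace Kostka

/-- Shape after removing all values `≥ v`. -/
def SH (l a : List ℕ) (v : ℕ) : ℕ → ℕ :=
  (a.drop v).foldr stripF (fun i => l.getD i 0)

def cnt (l a : List ℕ) (i v : ℕ) : ℕ := SH l a (v+1) i - SH l a v i

def rowT (l a : List ℕ) (m i : ℕ) : List ℕ :=
  ((List.range m).map fun v => List.replicate (cnt l a i v) v).flatten

def buildT (l a : List ℕ) : List (List ℕ) :=
  (List.range l.length).map fun i => rowT l a a.length i

lemma SH_of_ge {l a : List ℕ} {v : ℕ} (h : a.length ≤ v) :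
    SH l a v = fun i => l.getD i 0 := by
  unfold SH
  rw [List.drop_eq_nil_of_le h]
  rfl

lemma SH_succ {l a : List ℕ} {v : ℕ} (h : v < a.length) :
    SH l a v = stripF (a.getD v 0) (SH l a (v+1)) := by
  unfold SH
  rw [List.drop_eq_getElem_cons h, List.foldr_cons, List.getD_eq_getElem?_getD,
    List.getElem?_eq_getElem h]
  rfl

/-- The invariant carried down from `v = a.length` to `v = 0`. -/
def Inv (l a : List ℕ) (v : ℕ) : Prop :=
  (∀ i, SH l a v (i+1) ≤ SH l a v i) ∧
  (∀ i, (a.take (min i v)).sum ≤ ∑ j ∈ Finset.range i, SH l a v j) ∧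
  ((∑ j ∈ Finset.range l.length, SH l a v j) = (a.take v).sum) ∧
  (∀ i, l.length ≤ i → SH l a v i = 0)

section invariant

variable {l a : List ℕ}

lemma inv_base (hl : IsPartition l) (hs : l.sum = a.sum) (dom : Dominates l a) :
    Inv l a a.length := by
  have hSH : SH l a a.length = fun i => l.getD i 0 := SH_of_ge le_rfl
  refine ⟨?_, ?_, ?_, ?_⟩
  · intro i; rw [hSH]; exact getD_anti hl.1 (Nat.le_succ i)
  · intro i
    rw [hSH]
    calc (a.take (min i a.length)).sum ≤ (a.take i).sum := by
          apply List.monotone_sum_take; exact min_le_left _ _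
      _ ≤ (l.take i).sum := dom i
      _ = _ := sum_take_eq l i
  · rw [hSH, ← sum_take_eq, List.take_length, List.take_length, hs]
  · intro i hi
    rw [hSH]
    simp [List.getD_eq_getElem?_getD, List.getElem?_eq_none hi]

lemma inv_step (ha : IsPartition a) {v : ℕ} (hv : v < a.length) (h : Inv l a (v+1)) : Inv l a v := by
  obtain ⟨hdec, hdom, hsum, hvan⟩ := h
  obtain ⟨hasort, hapos⟩ := ha
  set s := a.getD v 0 with hs_def
  set f := SH l a (v+1) with hf_def
  have hSH : SH l a v = stripF s f := SH_succ hv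
  -- s ≤ f 0
  have ha0 : a.getD 0 0 ≤ f 0 := by
    have h1 := hdom 1
    rw [Finset.sum_range_one] at h1
    have : min 1 (v+1) = 1 := by omega
    rw [this] at h1
    calc a.getD 0 0 = (a.take 1).sum := by
          rw [sum_take_eq]; simp
      _ ≤ f 0 := h1
  have hsf0 : s ≤ f 0 := le_trans (getD_anti hasort (Nat.zero_le v)) ha0
  have hfL : ∀ i, l.length ≤ i → f i = 0 := hvan
  refine ⟨?_, ?_, ?_, ?_⟩
  · intro i; rw [hSH]; exact stripF_anti hdec i
  · -- partial sums
    intro i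
    rw [hSH]
    have htel := stripF_sum (s := s) (f := f) i
    rw [min_eq_left hsf0] at htel
    rcases le_or_gt s (f i) with hcase | hcase
    · rw [min_eq_left hcase] at htel
      have : (a.take (min i v)).sum ≤ (a.take (min i (v+1))).sum := by
        apply List.monotone_sum_take; omega
      have h2 := hdom i
      omega
    · rw [min_eq_right (le_of_lt hcase)] at htel
      -- goal: A_{min i v} + s ≤ F_{i+1}; M_i = F_i + f i - s
      rcases le_or_gt v i with hiv | hiv
      · -- min i v = v; use dominance at i+1
        have hmin : min i v = v := min_eq_right hiv
        have h2 := hdom (i+1)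
        have hmin2 : min (i+1) (v+1) = v+1 := by omega
        rw [hmin2] at h2
        have hA : (a.take (v+1)).sum = (a.take v).sum + s := take_sum_succ
        rw [Finset.sum_range_succ] at h2
        rw [hmin]
        omega
      · -- i < v
        have hmin : min i v = i := min_eq_left (le_of_lt hiv)
        rw [hmin]
        -- a_j ≥ f j + 1 for j ∈ [i, v)
        have hkey : ∀ j ∈ Finset.Ico i v, f j + 1 ≤ a.getD j 0 := by
          intro j hj
          rw [Finset.mem_Ico] at hj
          have h1 : f j ≤ f i := anti_of_succ hdec hj.1
          have h2 : s ≤ a.getD j 0 := getD_anti hasort (by omega)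
          omega
        have hIco : ∑ j ∈ Finset.Ico i v, (f j + 1) ≤ ∑ j ∈ Finset.Ico i v, a.getD j 0 :=
          Finset.sum_le_sum hkey
        have hsplitA : (a.take (v+1)).sum =
            (a.take i).sum + ∑ j ∈ Finset.Ico i v, a.getD j 0 + s := by
          rw [take_sum_succ, sum_take_eq, sum_take_eq, Finset.range_eq_Ico, Finset.range_eq_Ico,
            Finset.sum_Ico_consecutive (fun j => a.getD j 0)
              (Nat.zero_le i) (le_of_lt hiv)]
        have hsplitF : ∑ j ∈ Finset.range (v+1), f j =
            ∑ j ∈ Finset.range i, f j + ∑ j ∈ Finset.Ico i v, f j + f v := by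
          rw [Finset.sum_range_succ, Finset.range_eq_Ico, Finset.range_eq_Ico,
            Finset.sum_Ico_consecutive f (Nat.zero_le i) (le_of_lt hiv)]
        have hdomv : (a.take (v+1)).sum ≤ ∑ j ∈ Finset.range (v+1), f j := by
          have := hdom (v+1)
          rw [min_self] at this
          exact this
        have hfv : f v ≤ f i := anti_of_succ hdec (le_of_lt hiv)
        have hIcosum : ∑ j ∈ Finset.Ico i v, (f j + 1) =
            ∑ j ∈ Finset.Ico i v, f j + (v - i) := by
          rw [Finset.sum_add_distrib]
          simp [Nat.card_Ico]
        omega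
  · -- total sum
    rw [hSH]
    have htel := stripF_sum (s := s) (f := f) l.length
    rw [min_eq_left hsf0] at htel
    have hfLL : f l.length = 0 := hfL _ le_rfl
    rw [hfLL] at htel
    simp only [Nat.min_zero] at htel
    have hA : (a.take (v+1)).sum = (a.take v).sum + s := take_sum_succ
    omega
  · intro i hi
    rw [hSH]
    have h1 := hfL i hi
    have h2 := hfL (i+1) (by omega)
    unfold stripF
    omega

end invariant
end Kostka

namespace Kostka

section construction

variable {l a : List ℕ}

lemma inv_all (hl : IsPartition l) (ha : IsPartition a) (hs : l.sum = a.sum)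
    (dom : Dominates l a) : ∀ v, v ≤ a.length → Inv l a v := by
  have key : ∀ d, d ≤ a.length → Inv l a (a.length - d) := by
    intro d
    induction d with
    | zero => intro _; simpa using inv_base hl hs dom
    | succ d ih =>
      intro hd
      have h1 : a.length - d ≤ a.length := Nat.sub_le _ _
      have h2 : a.length - (d+1) < a.length := by omega
      have h3 : a.length - (d+1) + 1 = a.length - d := by omega
      have := inv_step ha (v := a.length - (d+1)) h2 (by rw [h3]; exact ih (by omega))
      exact this
  intro v hv
  have := key (a.length - v) (Nat.sub_le _ _)
  rwa [Nat.sub_sub_self hv] at this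

variable (hl : IsPartition l) (ha : IsPartition a) (hs : l.sum = a.sum)
    (dom : Dominates l a)
include hl ha hs dom

lemma SH_zero : ∀ i, SH l a 0 i = 0 := by
  obtain ⟨hdec, hdom, hsum, hvan⟩ := inv_all hl ha hs dom 0 (Nat.zero_le _)
  intro i
  rcases lt_or_ge i l.length with hi | hi
  · have h0 : ∑ j ∈ Finset.range l.length, SH l a 0 j = 0 := by simpa using hsum
    have := Finset.sum_eq_zero_iff.mp h0 i (Finset.mem_range.mpr hi)
    exact this
  · exact hvan i hi

lemma SH_dec (v : ℕ) : ∀ i, SH l a v (i+1) ≤ SH l a v i := by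
  rcases le_or_gt v a.length with hv | hv
  · exact (inv_all hl ha hs dom v hv).1
  · rw [SH_of_ge (le_of_lt hv)]
    intro i
    exact getD_anti hl.1 (Nat.le_succ i)

lemma SH_le_succ (v i : ℕ) : SH l a v i ≤ SH l a (v+1) i := by
  rcases lt_or_ge v a.length with hv | hv
  · rw [SH_succ hv]
    exact stripF_le (SH_dec hl ha hs dom (v+1)) i
  · rw [SH_of_ge hv, SH_of_ge (by omega)]

lemma SH_mono {v w : ℕ} (hvw : v ≤ w) (i : ℕ) : SH l a v i ≤ SH l a w i := by
  induction w with
  | zero => have : v = 0 := by omega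
            subst this; exact le_rfl
  | succ w ih =>
    rcases Nat.lt_or_ge v (w+1) with hh | hh
    · exact le_trans (ih (by omega)) (SH_le_succ hl ha hs dom w i)
    · have : v = w+1 := by omega
      subst this; exact le_rfl

/-- Key geometric fact: row `i` after stripping down to `v` is at least as long as
row `i+1` before that strip. -/
lemma SH_step_ge (v i : ℕ) (hv : v < a.length) :
    SH l a (v+1) (i+1) ≤ SH l a v i := by
  rw [SH_succ hv]
  exact stripF_ge_next (SH_dec hl ha hs dom (v+1)) i

lemma length_rowT (m i : ℕ) : (rowT l a m i).length = SH l a m i := by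
  induction m with
  | zero => simp [rowT, SH_zero hl ha hs dom i]
  | succ m ih =>
    unfold rowT at ih ⊢
    rw [List.range_succ, List.map_append, List.flatten_append]
    simp only [List.length_append, ih]
    simp only [List.map_cons, List.map_nil, List.flatten_cons, List.flatten_nil,
      List.length_append, List.length_replicate, List.append_nil, List.length_nil]
    have := SH_le_succ hl ha hs dom m i
    unfold cnt
    omega

omit hl ha hs dom in
lemma rowT_succ (m i : ℕ) :
    rowT l a (m+1) i = rowT l a m i ++ List.replicate (cnt l a i m) m := by
  unfold rowT
  rw [List.range_succ, List.map_append, List.flatten_append]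
  simp

lemma rowT_getD (m i : ℕ) : ∀ j, j < SH l a m i →
    ∃ v, v < m ∧ SH l a v i ≤ j ∧ j < SH l a (v+1) i ∧ (rowT l a m i).getD j 0 = v := by
  induction m with
  | zero => intro j hj; rw [SH_zero hl ha hs dom i] at hj; omega
  | succ m ih =>
    intro j hj
    rw [rowT_succ]
    rcases lt_or_ge j (SH l a m i) with h | h
    · obtain ⟨v, h1, h2, h3, h4⟩ := ih j h
      refine ⟨v, by omega, h2, h3, ?_⟩
      rw [List.getD_append _ _ _ _ (by rw [length_rowT hl ha hs dom]; exact h)]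
      exact h4
    · refine ⟨m, by omega, h, hj, ?_⟩
      rw [List.getD_append_right _ _ _ _ (by rw [length_rowT hl ha hs dom]; exact h)]
      rw [length_rowT hl ha hs dom]
      have hlt : j - SH l a m i < cnt l a i m := by
        unfold cnt
        have := SH_le_succ hl ha hs dom m i
        omega
      rw [List.getD_eq_getElem?_getD, List.getElem?_eq_getElem (by simpa using hlt)]
      simp

omit hl ha hs dom in
lemma rowT_sorted (m i : ℕ) : (rowT l a m i).Pairwise (· ≤ ·) := by
  unfold rowT
  rw [List.pairwise_flatten]
  constructor
  · intro r hr
    simp only [List.mem_map, List.mem_range] at hr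
    obtain ⟨v, _, rfl⟩ := hr
    rw [List.pairwise_replicate]
    right; exact le_rfl
  · rw [List.pairwise_map]
    have : (List.range m).Pairwise (· < ·) := List.pairwise_lt_range
    refine this.imp_of_mem ?_
    intro v w _ _ hvw x hx y hy
    rw [List.eq_of_mem_replicate hx, List.eq_of_mem_replicate hy]
    exact le_of_lt hvw

omit hl ha hs dom in
lemma count_rowT (m i v : ℕ) :
    (rowT l a m i).count v = if v < m then cnt l a i v else 0 := by
  induction m with
  | zero => simp [rowT]
  | succ m ih =>
    rw [rowT_succ, List.count_append, ih, List.count_replicate]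
    rcases Nat.lt_trichotomy v m with h | h | h
    · simp only [if_pos h, if_pos (by omega : v < m + 1)]
      have : ¬ (v == m) = true := by simp; omega
      simp [this]
      omega
    · subst h
      simp
    · have h1 : ¬ v < m := by omega
      have h2 : ¬ v < m + 1 := by omega
      have : ¬ (v == m) = true := by simp; omega
      simp [h1, h2, this]
      omega

end construction
end Kostka

namespace Kostka
section build

variable {l a : List ℕ} (hl : IsPartition l) (ha : IsPartition a) (hs : l.sum = a.sum)
    (dom : Dominates l a)
include hl ha hs dom

omit hl ha hs dom in
lemma buildT_getD (p : ℕ) :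
    (buildT l a).getD p [] =
      if p < l.length then rowT l a a.length p else [] := by
  unfold buildT
  rcases lt_or_ge p l.length with hp | hp
  · rw [if_pos hp, List.getD_eq_getElem?_getD, List.getElem?_eq_getElem (by simpa using hp)]
    simp
  · rw [if_neg (by omega), List.getD_eq_getElem?_getD, List.getElem?_eq_none (by simpa using hp)]
    rfl

lemma buildT_shape : (buildT l a).map List.length = l := by
  apply List.ext_getElem
  · simp [buildT]
  · intro p h1 h2
    simp only [buildT, List.getElem_map, List.getElem_range]
    rw [length_rowT hl ha hs dom, SH_of_ge le_rfl]
    show l.getD p 0 = l[p]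
    rw [List.getD_eq_getElem?_getD, List.getElem?_eq_getElem h2]
    rfl

lemma buildT_ssyt : IsSSYT l (buildT l a) := by
  refine ⟨buildT_shape hl ha hs dom, ?_, ?_⟩
  · intro r hr
    simp only [buildT, List.mem_map, List.mem_range] at hr
    obtain ⟨i, _, rfl⟩ := hr
    exact rowT_sorted a.length i
  · intro i j hj
    rw [buildT_getD] at hj
    by_cases hi1 : i + 1 < l.length
    · rw [if_pos hi1, length_rowT hl ha hs dom, SH_of_ge le_rfl] at hj
      have hi : i < l.length := by omega
      rw [buildT_getD, buildT_getD, if_pos hi1, if_pos hi]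
      -- hj : j < l.getD (i+1) 0 = SH a.length (i+1)
      have hj' : j < SH l a a.length (i+1) := by rw [SH_of_ge le_rfl]; exact hj
      obtain ⟨v', hv'm, hv'1, hv'2, hv'e⟩ := rowT_getD hl ha hs dom a.length (i+1) j hj'
      have hkey : j < SH l a v' i :=
        lt_of_lt_of_le hv'2 (SH_step_ge hl ha hs dom v' i hv'm)
      have hik : j < SH l a a.length i :=
        lt_of_lt_of_le hkey (SH_mono hl ha hs dom (le_of_lt hv'm) i)
      obtain ⟨v, hvm, hv1, hv2, hve⟩ := rowT_getD hl ha hs dom a.length i j hik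
      rw [hve, hv'e]
      by_contra hc
      have : v' ≤ v := by omega
      have := SH_mono hl ha hs dom this i
      omega
    · rw [if_neg hi1] at hj
      simp at hj

lemma buildT_content (v : ℕ) : contentCount (buildT l a) v = a.getD v 0 := by
  unfold contentCount buildT
  rw [List.map_map]
  have : (List.count v ∘ fun i => rowT l a a.length i) =
      fun i => if v < a.length then cnt l a i v else 0 := by
    funext i
    simp only [Function.comp_apply]
    exact count_rowT a.length i v
  rw [this]
  rw [sum_map_range]
  rcases lt_or_ge v a.length with hv | hv
  · simp only [if_pos hv]
    have h1 := (inv_all hl ha hs dom v (by omega)).2.2.1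
    have h2 := (inv_all hl ha hs dom (v+1) (by omega)).2.2.1
    have hle : ∀ i ∈ Finset.range l.length, SH l a v i ≤ SH l a (v+1) i :=
      fun i _ => SH_le_succ hl ha hs dom v i
    have hsplit : ∑ i ∈ Finset.range l.length, cnt l a i v
        + ∑ i ∈ Finset.range l.length, SH l a v i
        = ∑ i ∈ Finset.range l.length, SH l a (v+1) i := by
      rw [← Finset.sum_add_distrib]
      apply Finset.sum_congr rfl
      intro i hi
      have := hle i hi
      unfold cnt
      omega
    have hA : (a.take (v+1)).sum = (a.take v).sum + a.getD v 0 := take_sum_succ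
    omega
  · simp only [if_neg (by omega : ¬ v < a.length)]
    rw [List.getD_eq_getElem?_getD, List.getElem?_eq_none hv]
    simp

end build
end Kostka

namespace Kostka
section forward

variable {l a : List ℕ}

lemma shape_facts {T : List (List ℕ)} (hshape : T.map List.length = l) :
    T.length = l.length ∧ ∀ p, p < T.length → (T.getD p []).length = l.getD p 0 := by
  constructor
  · rw [← hshape, List.length_map]
  · intro p hp
    have hp' : p < l.length := by rw [← hshape, List.length_map]; exact hp
    rw [List.getD_eq_getElem?_getD, List.getElem?_eq_getElem hp]
    show T[p].length = l.getD p 0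
    rw [List.getD_eq_getElem?_getD, List.getElem?_eq_getElem hp']
    show T[p].length = l[p]
    subst hshape
    simp

lemma getD_nil_of_ge {T : List (List ℕ)} {p : ℕ} (hp : T.length ≤ p) :
    T.getD p [] = [] := by
  rw [List.getD_eq_getElem?_getD, List.getElem?_eq_none hp]
  rfl

lemma entries_ge_row {T : List (List ℕ)} (hlp : IsPartition l)
    (hshape : T.map List.length = l)
    (hcol : ∀ i j, j < (T.getD (i+1) []).length →
      (T.getD i []).getD j 0 < (T.getD (i+1) []).getD j 0) :
    ∀ p j, j < (T.getD p []).length → p ≤ (T.getD p []).getD j 0 := by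
  obtain ⟨hTlen, hrowlen⟩ := shape_facts hshape
  intro p
  induction p with
  | zero => intro j _; exact Nat.zero_le _
  | succ p ih =>
    intro j hj
    have hp1 : p + 1 < T.length := by
      by_contra hc
      rw [getD_nil_of_ge (le_of_not_gt hc)] at hj
      simp at hj
    have hp : p < T.length := by omega
    have hlen1 : (T.getD (p+1) []).length = l.getD (p+1) 0 := hrowlen _ hp1
    have hlen0 : (T.getD p []).length = l.getD p 0 := hrowlen _ hp
    have hjp : j < (T.getD p []).length := by
      rw [hlen0]
      rw [hlen1] at hj
      exact lt_of_lt_of_le hj (getD_anti hlp.1 (Nat.le_succ p))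
    have h1 := ih j hjp
    have h2 := hcol p j hj
    omega

lemma sum_count_eq_countP (r : List ℕ) (i : ℕ) :
    ∑ v ∈ Finset.range i, r.count v = r.countP (fun x => decide (x < i)) := by
  induction r with
  | nil => simp
  | cons x r ih =>
    simp only [List.countP_cons, List.count_cons]
    rw [Finset.sum_add_distrib, ih]
    congr 1
    have : ∀ v ∈ Finset.range i, (if (x == v) = true then 1 else 0) =
        (if v = x then (fun _ => 1) v else 0) := by
      intro v _
      by_cases h : v = x
      · subst h; simp
      · have : ¬ (x == v) = true := by simp; omega
        simp [h, this]
    rw [Finset.sum_congr rfl this, Finset.sum_ite_eq']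
    by_cases h : x < i
    · simp [Finset.mem_range, h]
    · simp [Finset.mem_range, h]

lemma sum_contentCount (T : List (List ℕ)) (i : ℕ) :
    ∑ v ∈ Finset.range i, contentCount T v =
      (T.map fun r => r.countP (fun x => decide (x < i))).sum := by
  induction T with
  | nil => simp [contentCount]
  | cons r T ih =>
    simp only [contentCount, List.map_cons, List.sum_cons] at ih ⊢
    rw [Finset.sum_add_distrib, ih, sum_count_eq_countP]

lemma sum_map_getD (T : List (List ℕ)) (g : List ℕ → ℕ) :
    (T.map g).sum = ∑ p ∈ Finset.range T.length, g (T.getD p []) := by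
  induction T with
  | nil => simp
  | cons r T ih =>
    simp only [List.map_cons, List.sum_cons, List.length_cons]
    rw [Finset.sum_range_succ']
    simp only [List.getD_cons_succ, List.getD_cons_zero]
    rw [← ih]
    omega

lemma dominates_of_ssyt (hlp : IsPartition l) {T : List (List ℕ)}
    (h1 : IsSSYT l T) (h2 : ∀ v : ℕ, contentCount T v = a.getD v 0) :
    Dominates l a := by
  obtain ⟨hshape, _, hcol⟩ := h1
  obtain ⟨hTlen, hrowlen⟩ := shape_facts hshape
  intro i
  have hA : (a.take i).sum = ∑ v ∈ Finset.range i, contentCount T v := by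
    rw [sum_take_eq]
    apply Finset.sum_congr rfl
    intro v _
    exact (h2 v).symm
  rw [hA, sum_contentCount, sum_map_getD]
  set N := max T.length i with hN
  have hsub : Finset.range T.length ⊆ Finset.range N := by
    apply Finset.range_subset_range.mpr; omega
  rw [Finset.sum_subset hsub (by
    intro p _ hp
    rw [Finset.mem_range, not_lt] at hp
    rw [getD_nil_of_ge (by omega)]
    simp)]
  have hbound : ∀ p ∈ Finset.range N,
      (T.getD p []).countP (fun x => decide (x < i)) ≤
        (if p < i then l.getD p 0 else 0) := by
    intro p _
    by_cases hpi : p < i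
    · rw [if_pos hpi]
      rcases lt_or_ge p T.length with hp | hp
      · calc (T.getD p []).countP (fun x => decide (x < i)) ≤ (T.getD p []).length :=
              List.countP_le_length
          _ = l.getD p 0 := hrowlen _ hp
      · rw [getD_nil_of_ge hp]; simp
    · rw [if_neg hpi]
      rw [Nat.le_zero, List.countP_eq_zero]
      intro x hx
      have hxp : p ≤ x := by
        have hlen : x ∈ T.getD p [] := hx
        obtain ⟨j, hj, rfl⟩ := List.getElem_of_mem hlen
        have := entries_ge_row hlp hshape hcol p j (by exact hj)
        rw [List.getD_eq_getElem?_getD, List.getElem?_eq_getElem hj] at this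
        exact this
      simp
      omega
  calc ∑ p ∈ Finset.range N, (T.getD p []).countP (fun x => decide (x < i))
      ≤ ∑ p ∈ Finset.range N, (if p < i then l.getD p 0 else 0) :=
        Finset.sum_le_sum hbound
    _ = ∑ p ∈ Finset.range i, l.getD p 0 := by
        rw [← Finset.sum_subset (Finset.range_subset_range.mpr (by omega : i ≤ N))]
        · apply Finset.sum_congr rfl
          intro p hp
          rw [Finset.mem_range] at hp
          rw [if_pos hp]
        · intro p _ hp
          rw [Finset.mem_range, not_lt] at hp
          rw [if_neg (by omega)]
    _ = (l.take i).sum := (sum_take_eq l i).symm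

end forward
end Kostka

namespace Kostka
section finite

variable {l a : List ℕ}

/-- Every entry of a valid tableau is `< a.length`. -/
lemma entry_lt {T : List (List ℕ)}
    (h2 : ∀ v : ℕ, contentCount T v = a.getD v 0)
    {p j : ℕ} (hp : p < T.length) (hj : j < (T.getD p []).length) :
    (T.getD p []).getD j 0 < a.length := by
  have hrow : T.getD p [] = T[p] := by
    rw [List.getD_eq_getElem?_getD, List.getElem?_eq_getElem hp]; rfl
  rw [hrow] at hj ⊢
  set e := T[p].getD j 0 with he
  have hmem : e ∈ T[p] := by
    rw [he, List.getD_eq_getElem?_getD, List.getElem?_eq_getElem hj]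
    exact List.getElem_mem hj
  have hcount : 0 < T[p].count e := List.count_pos_iff.mpr hmem
  have hrowmem : T[p] ∈ T := List.getElem_mem hp
  have hle : T[p].count e ≤ contentCount T e := by
    unfold contentCount
    exact List.single_le_sum (by simp) _ (List.mem_map_of_mem hrowmem)
  have : 0 < a.getD e 0 := by rw [← h2 e]; omega
  exact getD_pos_lt this

lemma finite_tableaux :
    Finite {T : List (List ℕ) // IsSSYT l T ∧ ∀ v : ℕ, contentCount T v = a.getD v 0} := by
  let F := ∀ i : Fin l.length, Fin (l.get i) → Fin (a.length + 1)
  have : Finite F := by infer_instance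
  apply Finite.of_injective
    (f := fun (T : {T : List (List ℕ) // IsSSYT l T ∧
        ∀ v : ℕ, contentCount T v = a.getD v 0}) =>
      (fun i j => ⟨min ((T.1.getD i []).getD j 0) a.length, by omega⟩ : F))
  rintro ⟨T, hT1, hT2⟩ ⟨S, hS1, hS2⟩ heq
  simp only [Subtype.mk.injEq]
  obtain ⟨hTlen, hTrow⟩ := shape_facts hT1.1
  obtain ⟨hSlen, hSrow⟩ := shape_facts hS1.1
  apply List.ext_getElem (by omega)
  intro p hp1 hp2
  have hpl : p < l.length := by omega
  have hTg : T.getD p [] = T[p] := by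
    rw [List.getD_eq_getElem?_getD, List.getElem?_eq_getElem hp1]; rfl
  have hSg : S.getD p [] = S[p] := by
    rw [List.getD_eq_getElem?_getD, List.getElem?_eq_getElem hp2]; rfl
  apply List.ext_getElem
  · rw [← hTg, ← hSg, hTrow p hp1, hSrow p hp2]
  · intro j hj1 hj2
    have hjT : j < (T.getD p []).length := by rw [hTg]; exact hj1
    have hjS : j < (S.getD p []).length := by rw [hSg]; exact hj2
    have heT : (T.getD p []).getD j 0 = T[p][j] := by
      rw [hTg, List.getD_eq_getElem?_getD, List.getElem?_eq_getElem hj1]; rfl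
    have heS : (S.getD p []).getD j 0 = S[p][j] := by
      rw [hSg, List.getD_eq_getElem?_getD, List.getElem?_eq_getElem hj2]; rfl
    have hbT : (T.getD p []).getD j 0 < a.length := entry_lt hT2 hp1 hjT
    have hbS : (S.getD p []).getD j 0 < a.length := entry_lt hS2 hp2 hjS
    have hjl : j < l.get ⟨p, hpl⟩ := by
      have h1 := hTrow p hp1
      rw [hTg] at h1
      rw [List.getD_eq_getElem?_getD, List.getElem?_eq_getElem hpl] at h1
      simp only [List.get_eq_getElem, Fin.val_mk]
      simp only [Option.getD_some] at h1
      omega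
    have := congrFun (congrFun heq ⟨p, hpl⟩) ⟨j, hjl⟩
    simp only [Fin.mk.injEq, Fin.val_mk] at this
    rw [heT, heS] at this
    omega

end finite
end Kostka

/-- For partitions `l` and `a` of the same `n`, the Kostka number
`K_{l,a}` is positive iff `l` dominates `a`. -/
theorem kostka_pos_iff_dominates (n : ℕ) (l a : List ℕ)
    (hl : IsPartition l) (ha : IsPartition a)
    (hls : l.sum = n) (has : a.sum = n) :
    0 < kostkaL l a ↔ Dominates l a := by
  have hs : l.sum = a.sum := by rw [hls, has]
  constructor
  · intro hpos
    have hne : Nonempty {T : List (List ℕ) // IsSSYT l T ∧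
        ∀ v : ℕ, contentCount T v = a.getD v 0} := by
      by_contra hc
      rw [not_nonempty_iff] at hc
      rw [kostkaL, Nat.card_of_isEmpty] at hpos
      omega
    obtain ⟨⟨T, h1, h2⟩⟩ := hne
    exact Kostka.dominates_of_ssyt hl h1 h2
  · intro dom
    have : Finite {T : List (List ℕ) // IsSSYT l T ∧
        ∀ v : ℕ, contentCount T v = a.getD v 0} := Kostka.finite_tableaux
    have : Nonempty {T : List (List ℕ) // IsSSYT l T ∧
        ∀ v : ℕ, contentCount T v = a.getD v 0} :=
      ⟨⟨Kostka.buildT l a, Kostka.buildT_ssyt hl ha hs dom,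
        Kostka.buildT_content hl ha hs dom⟩⟩
    exact Nat.card_pos
end

section
/- Let μ, ν be partitions of n and suppose there exists a partition λ of n with g(μ, ν, λ) > 0 such that every partition τ with g(μ, ν, τ) > 0 satisfies τ ⪯ λ in dominance order. Then for every k, a monomial x^α appears in s_μ ∗ s_ν(x_1,…,x_k) if and only if it appears in s_λ(x_1,…,x_k); in particular s_μ ∗ s_ν has a saturated Newton polytope. -/
/-- The set of exponent vectors of monomials appearing in `s_l(x_1, …, x_k)`. -/
def schurSupport (k : ℕ) (l : List ℕ) : Set (Fin k → ℕ) :=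
  {a | ∃ T, IsSSYT l T ∧ hasContent k T a}

/-- The set of exponent vectors of monomials appearing in the Kronecker product
`s_μ ∗ s_ν = ∑_τ g(μ,ν,τ) s_τ` in `k` variables, where `g : List ℕ → ℕ` is the
(nonnegative) coefficient function `τ ↦ g(μ,ν,τ)`. -/
def kronSupport (n k : ℕ) (g : List ℕ → ℕ) : Set (Fin k → ℕ) :=
  {a | ∃ τ, IsPartition τ ∧ τ.sum = n ∧ 0 < g τ ∧ a ∈ schurSupport k τ}

open Finset

theorem List.sum_take_eq_sum_range_getD {M : Type*} [AddCommMonoid M] (l : List M) (i : ℕ) :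
    (l.take i).sum = ∑ r ∈ Finset.range i, l.getD r 0 := by
  induction l generalizing i with
  | nil => simp
  | cons x xs ih =>
    cases i with
    | zero => simp
    | succ i => simp [Finset.sum_range_succ', ih, add_comm]

theorem List.countP_eq_card_filter_range {α : Type*} (row : List α) (d : α) (p : α → Bool) :
    row.countP p = #{c ∈ Finset.range row.length | p (row.getD c d)} := by
  induction row with
  | nil => simp
  | cons x xs ih =>
    rw [List.countP_cons, ih, card_filter, card_filter, length_cons, Finset.sum_range_succ']
    simp

theorem List.sum_count_eq_countP {α : Type*} [DecidableEq α] (row : List α) (S : Finset α) :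
    ∑ v ∈ S, row.count v = row.countP (· ∈ S) := by
  rw [List.countP_eq_length_filter, ← Multiset.coe_card,
    ← Multiset.sum_count_eq_card (s := S) (by simp)]
  refine sum_congr rfl fun v hv => ?_
  rw [Multiset.coe_count, List.count_filter (by simpa using hv)]

theorem sum_contentCount_eq_sum_range (T : List (List ℕ)) (S : Finset ℕ) :
    ∑ v ∈ S, contentCount T v = ∑ r ∈ range T.length, (T.getD r []).countP (· ∈ S) := by
  induction T with
  | nil => simp [contentCount]
  | cons row T ih =>
    simp only [contentCount, List.map_cons, List.sum_cons, sum_add_distrib] at ih ⊢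
    simp [ih, sum_range_succ', List.sum_count_eq_countP, add_comm]

theorem card_le_card_filter_range {p : ℕ → Prop} [DecidablePred p]
    (hp : ∀ ⦃r s⦄, r ≤ s → p s → p r) {F : Finset ℕ} (hF : ∀ r ∈ F, p r) {i : ℕ}
    (hi : #F ≤ i) : #F ≤ #{r ∈ range i | p r} := by
  by_cases hall : ∀ r < i, p r
  · rwa [filter_true_of_mem fun r hr => hall r (mem_range.1 hr), card_range]
  · push Not at hall
    obtain ⟨w, hwi, hw⟩ := hall
    refine card_le_card fun r hr => mem_filter.2 ⟨mem_range.2 ?_, hF r hr⟩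
    exact (lt_of_not_ge fun hwr => hw (hp hwr (hF r hr))).trans hwi

theorem IsPartition.antitone_getD {l : List ℕ} (hl : IsPartition l) : Antitone (l.getD · 0) := by
  intro r s hrs
  rcases lt_or_ge s l.length with hs | hs
  · rcases hrs.lt_or_eq with h | rfl
    · simp only [List.getD_eq_getElem _ _ hs, List.getD_eq_getElem _ _ (h.trans hs)]
      exact List.pairwise_iff_getElem.1 hl.1 r s _ hs h
    · rfl
  · show l.getD s 0 ≤ _
    rw [List.getD_eq_default _ _ hs]
    exact Nat.zero_le _

section IsSSYT

variable {l : List ℕ} {T : List (List ℕ)}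

theorem IsSSYT.length_eq (hT : IsSSYT l T) : T.length = l.length := by
  rw [← hT.1, List.length_map]

theorem IsSSYT.length_getD (hT : IsSSYT l T) (r : ℕ) : (T.getD r []).length = l.getD r 0 := by
  rw [← hT.1, ← List.length_nil, List.getD_map]

theorem IsSSYT.strictMonoOn_column (hl : IsPartition l) (hT : IsSSYT l T) (c : ℕ) :
    StrictMonoOn (fun r => (T.getD r []).getD c 0) {r | c < l.getD r 0} := by
  intro r _ s hs hrs
  induction s, hrs using Nat.le_induction with
  | base => exact hT.2.2 r c (by rwa [hT.length_getD])
  | succ s hrs ih =>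
    exact (ih (lt_of_lt_of_le hs (hl.antitone_getD s.le_succ))).trans
      (hT.2.2 s c (by rwa [hT.length_getD]))

theorem IsSSYT.card_column_filter_mem_le (hl : IsPartition l) (hT : IsSSYT l T)
    (S : Finset ℕ) (c : ℕ) :
    #{r ∈ range l.length | c < l.getD r 0 ∧ (T.getD r []).getD c 0 ∈ S} ≤
      #{r ∈ range #S | c < l.getD r 0} := by
  refine card_le_card_filter_range (fun r s hrs hs => lt_of_lt_of_le hs (hl.antitone_getD hrs))
    (fun r hr => (mem_filter.1 hr).2.1) ?_
  refine card_le_card_of_injOn _ (fun r hr => (mem_filter.1 hr).2.2) ?_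
  exact (hT.strictMonoOn_column hl c).injOn.mono fun r hr => (mem_filter.1 hr).2.1

theorem IsSSYT.sum_contentCount_le (hl : IsPartition l) (hT : IsSSYT l T) (S : Finset ℕ) :
    ∑ v ∈ S, contentCount T v ≤ (l.take #S).sum := by
  set C := l.getD 0 0
  set e : ℕ → ℕ → ℕ := fun r c => (T.getD r []).getD c 0 with he
  have hC : ∀ r, l.getD r 0 ≤ C := fun r => hl.antitone_getD r.zero_le
  have row_eq : ∀ m ≤ C, ∀ (q : ℕ → Prop) [DecidablePred q],
      #{c ∈ range m | q c} = #{c ∈ range C | c < m ∧ q c} := by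
    intro m hm q _
    congr 1
    ext c
    simp only [mem_filter, mem_range]
    exact ⟨fun ⟨hc, hq⟩ => ⟨hc.trans_le hm, hc, hq⟩, fun ⟨_, hc, hq⟩ => ⟨hc, hq⟩⟩
  calc ∑ v ∈ S, contentCount T v
      = ∑ r ∈ range l.length, #{c ∈ range C | c < l.getD r 0 ∧ e r c ∈ S} := by
        rw [sum_contentCount_eq_sum_range, hT.length_eq]
        refine sum_congr rfl fun r _ => ?_
        rw [List.countP_eq_card_filter_range _ 0, hT.length_getD, row_eq _ (hC r)]
        simp [he]
    _ = ∑ c ∈ range C, #{r ∈ range l.length | c < l.getD r 0 ∧ e r c ∈ S} :=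
        sum_card_bipartiteAbove_eq_sum_card_bipartiteBelow _
    _ ≤ ∑ c ∈ range C, #{r ∈ range #S | c < l.getD r 0} :=
        sum_le_sum fun c _ => hT.card_column_filter_mem_le hl S c
    _ = ∑ r ∈ range #S, #{c ∈ range C | c < l.getD r 0} :=
        (sum_card_bipartiteAbove_eq_sum_card_bipartiteBelow _).symm
    _ = (l.take #S).sum := by
        rw [List.sum_take_eq_sum_range_getD]
        refine sum_congr rfl fun r _ => ?_
        simpa using (row_eq _ (hC r) (fun _ => True)).symm

theorem IsSSYT.sum_contentCount_eq (hT : IsSSYT l T) {S : Finset ℕ}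
    (hS : ∀ row ∈ T, ∀ x ∈ row, x ∈ S) : ∑ v ∈ S, contentCount T v = l.sum := by
  rw [sum_contentCount_eq_sum_range, ← l.take_length, List.sum_take_eq_sum_range_getD,
    hT.length_eq]
  refine sum_congr rfl fun r hr => ?_
  rw [← hT.length_getD, List.countP_eq_length]
  have hrow : T.getD r [] ∈ T := by
    rw [List.getD_eq_getElem _ _ (by simpa [hT.length_eq] using hr)]
    exact List.getElem_mem _
  simpa using hS _ hrow

end IsSSYT

section hasContent

variable {k : ℕ} {T : List (List ℕ)} {a : Fin k → ℕ}

theorem hasContent.lt_of_mem (ha : hasContent k T a) {row : List ℕ} (hrow : row ∈ T)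
    {x : ℕ} (hx : x ∈ row) : x < k := by
  by_contra hxk
  have hpos : 0 < contentCount T x :=
    (List.count_pos_iff.2 hx).trans_le (List.le_sum_of_mem (List.mem_map_of_mem hrow))
  rw [ha x, dif_neg hxk] at hpos
  exact hpos.false

theorem hasContent.sum_eq (ha : hasContent k T a) (S : Finset (Fin k)) :
    ∑ i ∈ S, a i = ∑ v ∈ S.map Fin.valEmbedding, contentCount T v := by
  rw [sum_map]
  exact sum_congr rfl fun i _ => by simp [ha i]

end hasContent

/-- For weakly decreasing `a` this is the dominance `a ⪯ l`. -/
def IsMajorizedBy {k : ℕ} (a : Fin k → ℕ) (l : List ℕ) : Prop :=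
  ∑ i, a i = l.sum ∧ ∀ S : Finset (Fin k), ∑ i ∈ S, a i ≤ (l.take #S).sum

theorem IsSSYT.isMajorizedBy {l : List ℕ} {T : List (List ℕ)} {k : ℕ} {a : Fin k → ℕ}
    (hl : IsPartition l) (hT : IsSSYT l T) (ha : hasContent k T a) : IsMajorizedBy a l := by
  refine ⟨?_, fun S => ?_⟩
  · rw [ha.sum_eq, Fin.map_valEmbedding_univ]
    exact hT.sum_contentCount_eq fun row hrow x hx => mem_Iio.2 (ha.lt_of_mem hrow hx)
  · rw [ha.sum_eq, ← card_map Fin.valEmbedding]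
    exact hT.sum_contentCount_le hl _

section removeStrip

/-- The shape left after removing the lowest cell of each of the first `m` columns of the
shape with row lengths `t`. -/
def removeStrip (m : ℕ) (t : ℕ → ℕ) (r : ℕ) : ℕ :=
  t r - min m (t r) + min m (t (r + 1))

variable {t : ℕ → ℕ}

theorem removeStrip_le (m : ℕ) (ht : Antitone t) (r : ℕ) : removeStrip m t r ≤ t r := by
  have : t (r + 1) ≤ t r := ht r.le_succ
  simp only [removeStrip]
  omega

theorem le_removeStrip (m : ℕ) (ht : Antitone t) (r : ℕ) : t (r + 1) ≤ removeStrip m t r := by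
  have : t (r + 1) ≤ t r := ht r.le_succ
  simp only [removeStrip]
  omega

theorem antitone_removeStrip (m : ℕ) (ht : Antitone t) : Antitone (removeStrip m t) :=
  antitone_nat_of_succ_le fun r => (removeStrip_le m ht (r + 1)).trans (le_removeStrip m ht r)

theorem sum_range_removeStrip_add (m : ℕ) (t : ℕ → ℕ) (i : ℕ) :
    ∑ r ∈ range i, removeStrip m t r + min m (t 0) = ∑ r ∈ range i, t r + min m (t i) := by
  induction i with
  | zero => simp
  | succ i ih =>
    simp only [sum_range_succ, removeStrip] at ih ⊢
    omega

end removeStrip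

section stripChain

/-- The shape of the entries `< v` when strips of sizes `a (k - 1), …, a v` are removed from `t`,
largest entry first. -/
def stripChain (a : ℕ → ℕ) (k : ℕ) (t : ℕ → ℕ) (v : ℕ) : ℕ → ℕ :=
  if v < k then removeStrip (a v) (stripChain a k t (v + 1)) else t
termination_by k - v

variable {a : ℕ → ℕ} {k : ℕ} {t : ℕ → ℕ}

theorem stripChain_of_lt {v : ℕ} (hv : v < k) :
    stripChain a k t v = removeStrip (a v) (stripChain a k t (v + 1)) := by
  rw [stripChain, if_pos hv]

theorem stripChain_of_le {v : ℕ} (hv : k ≤ v) : stripChain a k t v = t := by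
  rw [stripChain, if_neg hv.not_gt]

theorem antitone_stripChain (ht : Antitone t) (v : ℕ) : Antitone (stripChain a k t v) := by
  fun_induction stripChain a k t v with
  | case1 v hv ih => exact antitone_removeStrip _ ih
  | case2 => exact ht

theorem stripChain_le (ht : Antitone t) (v r : ℕ) : stripChain a k t v r ≤ t r := by
  fun_induction stripChain a k t v with
  | case1 v hv ih => exact (removeStrip_le _ (antitone_stripChain ht _) r).trans ih
  | case2 => exact le_rfl

theorem monotone_stripChain_apply (ht : Antitone t) (r : ℕ) :
    Monotone (stripChain a k t · r) := by
  refine monotone_nat_of_le_succ fun v => ?_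
  rcases lt_or_ge v k with hv | hv
  · rw [stripChain_of_lt hv]
    exact removeStrip_le _ (antitone_stripChain ht _) r
  · rw [stripChain_of_le hv, stripChain_of_le (hv.trans v.le_succ)]

theorem stripChain_succ_succ_le (ht : Antitone t) (v r : ℕ) :
    stripChain a k t (v + 1) (r + 1) ≤ stripChain a k t v r := by
  rcases lt_or_ge v k with hv | hv
  · rw [stripChain_of_lt hv]
    exact le_removeStrip _ (antitone_stripChain ht _) r
  · rw [stripChain_of_le hv, stripChain_of_le (hv.trans v.le_succ)]
    exact ht r.le_succ

/-- If the strip of `a v` cells reaches row `#S`, the bound for `S` comes from the bound for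
`insert v S` before its removal. -/
theorem sum_le_sum_range_stripChain
    (hsub : ∀ S ⊆ range k, ∑ x ∈ S, a x ≤ ∑ r ∈ range #S, t r) {v : ℕ} (hv : v ≤ k)
    {S : Finset ℕ} (hS : S ⊆ range v) : ∑ x ∈ S, a x ≤ ∑ r ∈ range #S, stripChain a k t v r := by
  induction hv using Nat.decreasingInduction generalizing S with
  | self => rw [stripChain_of_le le_rfl]; exact hsub S hS
  | of_succ v hv ih =>
    rw [stripChain_of_lt hv]
    set u := stripChain a k t (v + 1)
    have hstrip := sum_range_removeStrip_add (a v) u #S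
    have hmin : min (a v) (u 0) ≤ a v := min_le_left _ _
    have hSv : S ⊆ range (v + 1) := hS.trans (range_subset_range.2 v.le_succ)
    rcases le_or_gt (a v) (u #S) with hle | hlt
    · have := ih hSv
      rw [min_eq_left hle] at hstrip
      omega
    · have hvS : v ∉ S := fun h => lt_irrefl v (mem_range.1 (hS h))
      have := ih (insert_subset (self_mem_range_succ v) hSv)
      rw [sum_insert hvS, card_insert_of_notMem hvS, sum_range_succ] at this
      rw [min_eq_right hlt.le] at hstrip
      omega

theorem sum_range_stripChain_add (hsub : ∀ S ⊆ range k, ∑ x ∈ S, a x ≤ ∑ r ∈ range #S, t r)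
    (ht : Antitone t) {N : ℕ} (htN : t N = 0) {v : ℕ} (hv : v < k) :
    ∑ r ∈ range N, stripChain a k t v r + a v = ∑ r ∈ range N, stripChain a k t (v + 1) r := by
  have hav : a v ≤ stripChain a k t (v + 1) 0 := by
    simpa using sum_le_sum_range_stripChain hsub hv (S := {v}) (by simp)
  have hN : stripChain a k t (v + 1) N = 0 :=
    Nat.eq_zero_of_le_zero (htN ▸ stripChain_le ht _ N)
  have := sum_range_removeStrip_add (a v) (stripChain a k t (v + 1)) N
  rw [← stripChain_of_lt hv, min_eq_left hav, hN, _root_.min_zero] at this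
  omega

theorem stripChain_zero (hsub : ∀ S ⊆ range k, ∑ x ∈ S, a x ≤ ∑ r ∈ range #S, t r)
    (ht : Antitone t) {N : ℕ} (htN : t N = 0)
    (hsum : ∑ x ∈ range k, a x = ∑ r ∈ range N, t r) : stripChain a k t 0 = 0 := by
  have htotal : ∀ v ≤ k,
      ∑ r ∈ range N, stripChain a k t v r + ∑ x ∈ Ico v k, a x = ∑ r ∈ range N, t r := by
    intro v hv
    induction hv using Nat.decreasingInduction with
    | self => simp [stripChain_of_le le_rfl]
    | of_succ v hv ih =>
      rw [sum_eq_sum_Ico_succ_bot hv, ← ih, ← sum_range_stripChain_add hsub ht htN hv]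
      ring
  have h0 := htotal 0 k.zero_le
  rw [← range_eq_Ico, hsum, add_eq_right, sum_eq_zero_iff] at h0
  funext r
  rcases lt_or_ge r N with hr | hr
  · exact h0 r (mem_range.2 hr)
  · exact Nat.eq_zero_of_le_zero ((stripChain_le ht 0 r).trans ((ht hr).trans htN.le))

end stripChain

section cumulativeRow

def cumulativeRow (G : ℕ → ℕ) (k : ℕ) : List ℕ :=
  (List.range k).flatMap fun v => List.replicate (G (v + 1) - G v) v

variable {G : ℕ → ℕ}

theorem cumulativeRow_succ (G : ℕ → ℕ) (k : ℕ) :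
    cumulativeRow G (k + 1) = cumulativeRow G k ++ List.replicate (G (k + 1) - G k) k := by
  simp [cumulativeRow, List.range_succ]

theorem length_cumulativeRow (hG : Monotone G) (k : ℕ) :
    (cumulativeRow G k).length = G k - G 0 := by
  induction k with
  | zero => simp [cumulativeRow]
  | succ k ih =>
    have : G 0 ≤ G k := hG k.zero_le
    have : G k ≤ G (k + 1) := hG k.le_succ
    rw [cumulativeRow_succ, List.length_append, ih, List.length_replicate]
    omega

theorem pairwise_cumulativeRow (G : ℕ → ℕ) (k : ℕ) : (cumulativeRow G k).Pairwise (· ≤ ·) := by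
  refine List.pairwise_flatMap.2 ⟨fun v _ => List.pairwise_replicate.2 (Or.inr le_rfl), ?_⟩
  refine List.pairwise_lt_range.imp fun h x hx y hy => ?_
  rw [List.eq_of_mem_replicate hx, List.eq_of_mem_replicate hy]
  exact h.le

theorem count_cumulativeRow (G : ℕ → ℕ) (k x : ℕ) :
    (cumulativeRow G k).count x = if x < k then G (x + 1) - G x else 0 := by
  induction k with
  | zero => simp [cumulativeRow]
  | succ k ih =>
    rw [cumulativeRow_succ, List.count_append, ih, List.count_replicate]
    rcases lt_trichotomy x k with h | rfl | h
    · simp [h, h.ne', h.trans k.lt_succ_self]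
    · simp
    · simp [h.not_gt, h.ne, (show ¬ x < k + 1 by omega)]

theorem getD_cumulativeRow_lt_iff (hG : Monotone G) (hG0 : G 0 = 0) {k j : ℕ} (hj : j < G k)
    {v : ℕ} (hv : v ≤ k) : (cumulativeRow G k).getD j 0 < v ↔ j < G v := by
  induction k generalizing v with
  | zero => simp_all
  | succ k ih =>
    rw [cumulativeRow_succ]
    by_cases hjk : j < G k
    · have hlen : j < (cumulativeRow G k).length := by rwa [length_cumulativeRow hG, hG0]
      rw [List.getD_append _ _ _ _ hlen]
      rcases hv.lt_or_eq with hv | rfl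
      · exact ih hjk (Nat.le_of_lt_succ hv)
      · simpa [hj] using ((ih hjk le_rfl).2 hjk).trans k.lt_succ_self
    · have hlen : (cumulativeRow G k).length = G k := by
        rw [length_cumulativeRow hG, hG0, Nat.sub_zero]
      rw [List.getD_append_right _ _ _ _ (by omega),
        List.getD_replicate _ (by rw [hlen]; omega)]
      rcases hv.lt_or_eq with hv | rfl
      · have : G v ≤ G k := hG (Nat.le_of_lt_succ hv)
        constructor <;> intro h <;> omega
      · simpa using hj

end cumulativeRow

section tableauOfChain

def tableauOfChain (G : ℕ → ℕ → ℕ) (N k : ℕ) : List (List ℕ) :=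
  (List.range N).map fun r => cumulativeRow (G r) k

theorem getD_tableauOfChain (G : ℕ → ℕ → ℕ) (N k r : ℕ) :
    (tableauOfChain G N k).getD r [] = if r < N then cumulativeRow (G r) k else [] := by
  split_ifs with hr
  · simp [tableauOfChain, hr]
  · exact List.getD_eq_default _ _ (by simpa [tableauOfChain] using hr)

theorem contentCount_tableauOfChain (G : ℕ → ℕ → ℕ) (N k v : ℕ) :
    contentCount (tableauOfChain G N k) v =
      if v < k then ∑ r ∈ range N, (G r (v + 1) - G r v) else 0 := by
  rw [contentCount, tableauOfChain, List.map_map]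
  change ∑ r ∈ range N, (cumulativeRow (G r) k).count v = _
  split_ifs with hv <;> simp [count_cumulativeRow, hv]

variable {l : List ℕ} {G : ℕ → ℕ → ℕ} {k : ℕ}

/-- By `hcross`, an entry `v` in row `r + 1` lies below an entry `< v`. -/
theorem isSSYT_tableauOfChain (hmono : ∀ r, Monotone (G r)) (hzero : ∀ r, G r 0 = 0)
    (hk : ∀ r, G r k = l.getD r 0) (hcross : ∀ r v, G (r + 1) (v + 1) ≤ G r v) :
    IsSSYT l (tableauOfChain G l.length k) := by
  have hlen : ∀ r, (cumulativeRow (G r) k).length = l.getD r 0 := fun r => by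
    rw [length_cumulativeRow (hmono r), hzero, hk, Nat.sub_zero]
  refine ⟨List.ext_getElem (by simp [tableauOfChain]) fun r _ hr => ?_, ?_, fun r j hj => ?_⟩
  · simp [tableauOfChain, hlen, List.getElem?_eq_getElem hr]
  · simp only [tableauOfChain, List.mem_map]
    rintro _ ⟨r, -, rfl⟩
    exact pairwise_cumulativeRow _ _
  · rw [getD_tableauOfChain] at hj
    split_ifs at hj with hr
    · rw [getD_tableauOfChain, getD_tableauOfChain, if_pos hr, if_pos (by omega)]
      rw [hlen, ← hk] at hj
      set v := (cumulativeRow (G (r + 1)) k).getD j 0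
      have hvk : v < k := (getD_cumulativeRow_lt_iff (hmono _) (hzero _) hj le_rfl).2 hj
      have hjv : j < G r v := lt_of_lt_of_le
        ((getD_cumulativeRow_lt_iff (hmono _) (hzero _) hj hvk).1 v.lt_succ_self) (hcross r v)
      exact (getD_cumulativeRow_lt_iff (hmono _) (hzero _)
        (hjv.trans_le (hmono r hvk.le)) hvk.le).2 hjv
    · simp at hj

end tableauOfChain

theorem exists_isSSYT_of_sum_le {l : List ℕ} (hl : IsPartition l) {k : ℕ} {a : ℕ → ℕ}
    (hsum : ∑ x ∈ range k, a x = l.sum)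
    (hsub : ∀ S ⊆ range k, ∑ x ∈ S, a x ≤ (l.take #S).sum) :
    ∃ T, IsSSYT l T ∧ ∀ v, contentCount T v = if v < k then a v else 0 := by
  set t : ℕ → ℕ := (l.getD · 0)
  have ht : Antitone t := hl.antitone_getD
  have hsub' : ∀ S ⊆ range k, ∑ x ∈ S, a x ≤ ∑ r ∈ range #S, t r := fun S hS => by
    simpa only [List.sum_take_eq_sum_range_getD] using hsub S hS
  have htN : t l.length = 0 := List.getD_eq_default _ _ le_rfl
  have hsum' : ∑ x ∈ range k, a x = ∑ r ∈ range l.length, t r := by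
    rw [hsum, ← List.sum_take_eq_sum_range_getD, List.take_length]
  have h0 := stripChain_zero hsub' ht htN hsum'
  refine ⟨tableauOfChain (fun r v => stripChain a k t v r) l.length k,
    isSSYT_tableauOfChain (monotone_stripChain_apply ht) (fun r => congrFun h0 r)
      (fun r => by rw [stripChain_of_le le_rfl]) (fun r v => stripChain_succ_succ_le ht v r),
    fun v => ?_⟩
  rw [contentCount_tableauOfChain]
  split_ifs with hv
  · have := sum_range_stripChain_add hsub' ht htN hv
    rw [sum_tsub_distrib _ fun r _ => monotone_stripChain_apply ht r v.le_succ]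
    simp only [Nat.succ_eq_add_one]
    omega
  · rfl

section IsMajorizedBy

variable {k : ℕ} {a : Fin k → ℕ} {l : List ℕ}

theorem IsMajorizedBy.mem_schurSupport (hl : IsPartition l) (ha : IsMajorizedBy a l) :
    a ∈ schurSupport k l := by
  set a' : ℕ → ℕ := fun v => if h : v < k then a ⟨v, h⟩ else 0
  have ha' : ∀ S : Finset (Fin k), ∑ i ∈ S, a i = ∑ x ∈ S.map Fin.valEmbedding, a' x :=
    fun S => by simp [a', sum_map]
  obtain ⟨T, hT, hc⟩ := exists_isSSYT_of_sum_le hl (a := a') (k := k)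
    (by rw [← Nat.Iio_eq_range, ← Fin.map_valEmbedding_univ, ← ha', ha.1])
    (fun S hS => by
      rw [← map_valEmbedding_attachFin fun x hx => mem_range.1 (hS hx), ← ha', card_map]
      exact ha.2 _)
  refine ⟨T, hT, fun v => ?_⟩
  rw [hc]
  split_ifs <;> simp [a', *]

theorem mem_schurSupport_iff (hl : IsPartition l) :
    a ∈ schurSupport k l ↔ IsMajorizedBy a l :=
  ⟨fun ⟨_, hT, ha⟩ => hT.isMajorizedBy hl ha, fun ha => ha.mem_schurSupport hl⟩

theorem IsMajorizedBy.of_dominates {τ : List ℕ} (ha : IsMajorizedBy a τ) (hd : Dominates l τ)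
    (hsum : τ.sum = l.sum) : IsMajorizedBy a l :=
  ⟨ha.1.trans hsum, fun S => (ha.2 S).trans (hd #S)⟩

end IsMajorizedBy

theorem kronSupport_eq_schurSupport {n k : ℕ} {g : List ℕ → ℕ} {l : List ℕ}
    (hl : IsPartition l) (hls : l.sum = n) (hg : 0 < g l)
    (hmax : ∀ τ, IsPartition τ → τ.sum = n → 0 < g τ → Dominates l τ) :
    kronSupport n k g = schurSupport k l := by
  ext a
  refine ⟨fun ⟨τ, hτ, hτs, hgτ, haτ⟩ => ?_, fun ha => ⟨l, hl, hls, hg, ha⟩⟩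
  rw [mem_schurSupport_iff hl]
  exact ((mem_schurSupport_iff hτ).1 haτ).of_dominates (hmax τ hτ hτs hgτ) (hτs.trans hls.symm)

section majorizationPolytope

def majorizationPolytope (k : ℕ) (l : List ℕ) : Set (Fin k → ℝ) :=
  {x | (∀ i, 0 ≤ x i) ∧ ∑ i, x i = l.sum ∧
    ∀ S : Finset (Fin k), ∑ i ∈ S, x i ≤ (l.take #S).sum}

variable {k : ℕ} {l : List ℕ}

theorem convex_majorizationPolytope : Convex ℝ (majorizationPolytope k l) := by
  rintro x ⟨hx₀, hx, hxS⟩ y ⟨hy₀, hy, hyS⟩ s t hs ht hst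
  refine ⟨fun i => ?_, ?_, fun S => ?_⟩ <;>
    simp only [Pi.add_apply, Pi.smul_apply, smul_eq_mul, sum_add_distrib, ← mul_sum]
  · exact add_nonneg (mul_nonneg hs (hx₀ i)) (mul_nonneg ht (hy₀ i))
  · rw [hx, hy, ← add_mul, hst, one_mul]
  · calc s * ∑ i ∈ S, x i + t * ∑ i ∈ S, y i
        ≤ s * (l.take #S).sum + t * (l.take #S).sum :=
          add_le_add (mul_le_mul_of_nonneg_left (hxS S) hs)
            (mul_le_mul_of_nonneg_left (hyS S) ht)
      _ = (l.take #S).sum := by rw [← add_mul, hst, one_mul]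

theorem natCast_mem_majorizationPolytope_iff {a : Fin k → ℕ} :
    (fun i => (a i : ℝ)) ∈ majorizationPolytope k l ↔ IsMajorizedBy a l := by
  simp only [majorizationPolytope, IsMajorizedBy, Set.mem_ofPred_eq, Nat.cast_nonneg,
    implies_true, true_and]
  norm_cast

theorem exists_natCast_eq_of_intCast_mem_majorizationPolytope {γ : Fin k → ℤ}
    (hγ : (fun i => (γ i : ℝ)) ∈ majorizationPolytope k l) :
    ∃ a : Fin k → ℕ, IsMajorizedBy a l ∧ ∀ i, (a i : ℤ) = γ i := by
  have hγ₀ : ∀ i, 0 ≤ γ i := fun i => Int.cast_nonneg_iff.1 (hγ.1 i)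
  refine ⟨fun i => (γ i).toNat, natCast_mem_majorizationPolytope_iff.1 ?_,
    fun i => Int.toNat_of_nonneg (hγ₀ i)⟩
  convert hγ using 2 with i
  exact_mod_cast Int.toNat_of_nonneg (hγ₀ i)

end majorizationPolytope

/-- Let `μ, ν ⊢ n` and let `g = g(μ,ν,·)` be the Kronecker coefficients.
Suppose there is a partition `l ⊢ n` with `g(μ,ν,l) > 0` dominating every partition `τ`
with `g(μ,ν,τ) > 0`.  Then for every `k` a monomial appears in `s_μ ∗ s_ν(x_1,…,x_k)`
iff it appears in `s_l(x_1,…,x_k)`; in particular `s_μ ∗ s_ν` has a saturated Newton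
polytope. -/
theorem kron_unique_max_SNP (n k : ℕ) (g : List ℕ → ℕ) (l : List ℕ)
    (hl : IsPartition l) (hls : l.sum = n) (hg : 0 < g l)
    (hmax : ∀ τ, IsPartition τ → τ.sum = n → 0 < g τ → Dominates l τ) :
    kronSupport n k g = schurSupport k l ∧
    ∀ γ : Fin k → ℤ,
      (fun i => (γ i : ℝ)) ∈
          convexHull ℝ ((fun a : Fin k → ℕ => fun i => (a i : ℝ)) '' kronSupport n k g) →
      ∃ a ∈ kronSupport n k g, ∀ i, (a i : ℤ) = γ i := by
  have hK := kronSupport_eq_schurSupport (k := k) hl hls hg hmax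
  have hmaj : ∀ a, a ∈ kronSupport n k g ↔ IsMajorizedBy a l := fun a => by
    rw [hK, mem_schurSupport_iff hl]
  refine ⟨hK, fun γ hγ => ?_⟩
  have hsub : (fun a : Fin k → ℕ => fun i => (a i : ℝ)) '' kronSupport n k g ⊆
      majorizationPolytope k l := by
    rintro _ ⟨a, ha, rfl⟩
    exact natCast_mem_majorizationPolytope_iff.2 ((hmaj a).1 ha)
  obtain ⟨a, ha, hγa⟩ := exists_natCast_eq_of_intCast_mem_majorizationPolytope
    (convexHull_min hsub convex_majorizationPolytope hγ)
  exact ⟨a, (hmaj a).2 ha, hγa⟩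
end

section
/- With the polytope P(μ, ν, a) ⊂ ℝ^3 defined by inequalities (1)-(10) as above (integer data, ν_1 < μ_1), if P contains a point all of whose coordinates lie in (1/2)ℤ, then P contains a point with all coordinates in ℤ. -/
set_option maxHeartbeats 4000000

/-- Integer (doubled-coordinate) form of membership in the polytope: `InPZ … p q r`
says that `(p/2, q/2, r/2) ∈ 𝒫(μ,ν;a)`. -/
def InPZ (μ1 μ2 ν1 ν2 ν3 a1 a2 a3 p q r : ℤ) : Prop :=
  (2*a1 - 2*ν2 ≤ p ∧ 2*a1 - 2*μ2 ≤ p ∧ a1 ≤ p ∧ p ≤ 2*a1 ∧ p ≤ 2*ν1) ∧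
  (2*a2 - 2*ν2 ≤ q ∧ 2*a2 - 2*μ2 ≤ q ∧ a2 ≤ q ∧ q ≤ 2*a2 ∧ q ≤ 2*ν1) ∧
  (2*a3 - 2*ν2 ≤ r ∧ 2*a3 - 2*μ2 ≤ r ∧ a3 ≤ r ∧ r ≤ 2*a3 ∧ r ≤ 2*ν1) ∧
  (2*ν3 ≤ p + q ∧ 2*a1 + 2*a2 - 2*ν1 ≤ p + q) ∧
  (2*ν3 ≤ p + r ∧ 2*a1 + 2*a3 - 2*ν1 ≤ p + r) ∧
  (2*ν3 ≤ q + r ∧ 2*a2 + 2*a3 - 2*ν1 ≤ q + r) ∧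
  (2*μ1 ≤ p + q + r) ∧
  (2*ν2 - 2*a1 ≤ -p + q + r ∧ 2*μ2 - 2*a1 ≤ -p + q + r ∧ -p + q + r ≤ 2*ν1 + 2*ν2 - 2*a1) ∧
  (2*ν2 - 2*a2 ≤ p - q + r ∧ 2*μ2 - 2*a2 ≤ p - q + r ∧ p - q + r ≤ 2*ν1 + 2*ν2 - 2*a2) ∧
  (2*ν2 - 2*a3 ≤ p + q - r ∧ 2*μ2 - 2*a3 ≤ p + q - r ∧ p + q - r ≤ 2*ν1 + 2*ν2 - 2*a3)

lemma InPZ_swap23 {μ1 μ2 ν1 ν2 ν3 a1 a2 a3 p q r : ℤ}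
    (h : InPZ μ1 μ2 ν1 ν2 ν3 a1 a2 a3 p q r) :
    InPZ μ1 μ2 ν1 ν2 ν3 a1 a3 a2 p r q := by
  simp only [InPZ] at h ⊢; omega

lemma InPZ_swap13 {μ1 μ2 ν1 ν2 ν3 a1 a2 a3 p q r : ℤ}
    (h : InPZ μ1 μ2 ν1 ν2 ν3 a1 a2 a3 p q r) :
    InPZ μ1 μ2 ν1 ν2 ν3 a3 a2 a1 r q p := by
  simp only [InPZ] at h ⊢; omega

/-- The hard case of rounding: exactly coordinates `p, q` odd, `r` even. -/
lemma twoOdd (n μ1 μ2 ν1 ν2 ν3 a1 a2 a3 p q r : ℤ)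
    (hμ : μ1 ≥ μ2 ∧ μ2 ≥ 0 ∧ μ1 + μ2 = n)
    (hν : ν1 ≥ ν2 ∧ ν2 ≥ ν3 ∧ ν3 ≥ 0 ∧ ν1 + ν2 + ν3 = n)
    (ha : a1 ≥ 0 ∧ a2 ≥ 0 ∧ a3 ≥ 0 ∧ a1 + a2 + a3 = n)
    (hνμ : ν1 < μ1)
    (hp : Odd p) (hq : Odd q) (hr : Even r)
    (h : InPZ μ1 μ2 ν1 ν2 ν3 a1 a2 a3 p q r) :
    ∃ u v w : ℤ, InPZ μ1 μ2 ν1 ν2 ν3 a1 a2 a3 (2*u) (2*v) (2*w) := by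
  obtain ⟨p2, hp2⟩ := hp
  obtain ⟨q2, hq2⟩ := hq
  obtain ⟨r2, hr2⟩ := hr
  simp only [InPZ] at h ⊢
  by_cases cA : p + q - r + 2 ≤ 2*ν1 + 2*ν2 - 2*a3
  · exact ⟨p2+1, q2+1, r2, by omega⟩
  by_cases cC : a2 ≤ q - 1 ∧ 2*ν2 - 2*a1 ≤ -p+q+r-2 ∧ 2*μ2 - 2*a1 ≤ -p+q+r-2 ∧
      p-q+r+2 ≤ 2*ν1+2*ν2-2*a2
  · exact ⟨p2+1, q2, r2, by omega⟩
  by_cases cD : a1 ≤ p - 1 ∧ 2*ν2 - 2*a2 ≤ p-q+r-2 ∧ 2*μ2 - 2*a2 ≤ p-q+r-2 ∧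
      -p+q+r+2 ≤ 2*ν1+2*ν2-2*a1
  · exact ⟨p2, q2+1, r2, by omega⟩
  · exact ⟨p2, q2, r2, by omega⟩

/-- Integer version of the main statement. -/
lemma keyZ (n μ1 μ2 ν1 ν2 ν3 a1 a2 a3 p q r : ℤ)
    (hμ : μ1 ≥ μ2 ∧ μ2 ≥ 0 ∧ μ1 + μ2 = n)
    (hν : ν1 ≥ ν2 ∧ ν2 ≥ ν3 ∧ ν3 ≥ 0 ∧ ν1 + ν2 + ν3 = n)
    (ha : a1 ≥ 0 ∧ a2 ≥ 0 ∧ a3 ≥ 0 ∧ a1 + a2 + a3 = n)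
    (hνμ : ν1 < μ1)
    (h : InPZ μ1 μ2 ν1 ν2 ν3 a1 a2 a3 p q r) :
    ∃ u v w : ℤ, InPZ μ1 μ2 ν1 ν2 ν3 a1 a2 a3 (2*u) (2*v) (2*w) := by
  rcases Int.even_or_odd p with hp | hp
  · rcases Int.even_or_odd q with hq | hq
    · rcases Int.even_or_odd r with hr | hr
      · -- all even
        obtain ⟨p2, hp2⟩ := hp; obtain ⟨q2, hq2⟩ := hq; obtain ⟨r2, hr2⟩ := hr
        exact ⟨p2, q2, r2, by simp only [InPZ] at h ⊢; omega⟩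
      · -- only r odd
        obtain ⟨p2, hp2⟩ := hp; obtain ⟨q2, hq2⟩ := hq; obtain ⟨r2, hr2⟩ := hr
        exact ⟨p2, q2, r2+1, by simp only [InPZ] at h ⊢; omega⟩
    · rcases Int.even_or_odd r with hr | hr
      · -- only q odd
        obtain ⟨p2, hp2⟩ := hp; obtain ⟨q2, hq2⟩ := hq; obtain ⟨r2, hr2⟩ := hr
        exact ⟨p2, q2+1, r2, by simp only [InPZ] at h ⊢; omega⟩
      · -- q, r odd : swap coordinates 1 and 3
        obtain ⟨u, v, w, hw⟩ := twoOdd n μ1 μ2 ν1 ν2 ν3 a3 a2 a1 r q p hμ hν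
          ⟨ha.2.2.1, ha.2.1, ha.1, by omega⟩ hνμ hr hq hp (InPZ_swap13 h)
        exact ⟨w, v, u, InPZ_swap13 hw⟩
  · rcases Int.even_or_odd q with hq | hq
    · rcases Int.even_or_odd r with hr | hr
      · -- only p odd
        obtain ⟨p2, hp2⟩ := hp; obtain ⟨q2, hq2⟩ := hq; obtain ⟨r2, hr2⟩ := hr
        exact ⟨p2+1, q2, r2, by simp only [InPZ] at h ⊢; omega⟩
      · -- p, r odd : swap coordinates 2 and 3
        obtain ⟨u, v, w, hw⟩ := twoOdd n μ1 μ2 ν1 ν2 ν3 a1 a3 a2 p r q hμ hν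
          ⟨ha.1, ha.2.2.1, ha.2.1, by omega⟩ hνμ hp hr hq (InPZ_swap23 h)
        exact ⟨u, w, v, InPZ_swap23 hw⟩
    · rcases Int.even_or_odd r with hr | hr
      · -- p, q odd
        exact twoOdd n μ1 μ2 ν1 ν2 ν3 a1 a2 a3 p q r hμ hν ha hνμ hp hq hr h
      · -- all odd
        obtain ⟨p2, hp2⟩ := hp; obtain ⟨q2, hq2⟩ := hq; obtain ⟨r2, hr2⟩ := hr
        exact ⟨p2+1, q2+1, r2+1, by simp only [InPZ] at h ⊢; omega⟩

/-- Membership in the polytope `𝒫(μ,ν;a) ⊂ ℝ³` of the paper, defined by the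
inequality families (1)–(10). -/
def InP (μ1 μ2 ν1 ν2 ν3 a1 a2 a3 : ℤ) (x y z : ℝ) : Prop :=
  -- (1)
  ((a1 : ℝ) - min (ν2 : ℝ) (min (μ2 : ℝ) ((a1 : ℝ) / 2)) ≤ x ∧
      x ≤ min (a1 : ℝ) (ν1 : ℝ)) ∧
  -- (2)
  ((a2 : ℝ) - min (ν2 : ℝ) (min (μ2 : ℝ) ((a2 : ℝ) / 2)) ≤ y ∧
      y ≤ min (a2 : ℝ) (ν1 : ℝ)) ∧
  -- (3)
  ((a3 : ℝ) - min (ν2 : ℝ) (min (μ2 : ℝ) ((a3 : ℝ) / 2)) ≤ z ∧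
      z ≤ min (a3 : ℝ) (ν1 : ℝ)) ∧
  -- (4)
  (max (ν3 : ℝ) ((a1 : ℝ) + (a2 : ℝ) - (ν1 : ℝ)) ≤ x + y) ∧
  -- (5)
  (max (ν3 : ℝ) ((a1 : ℝ) + (a3 : ℝ) - (ν1 : ℝ)) ≤ x + z) ∧
  -- (6)
  (max (ν3 : ℝ) ((a2 : ℝ) + (a3 : ℝ) - (ν1 : ℝ)) ≤ y + z) ∧
  -- (7)
  ((μ1 : ℝ) ≤ x + y + z) ∧
  -- (8)
  (max (ν2 : ℝ) (μ2 : ℝ) - (a1 : ℝ) ≤ -x + y + z ∧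
      -x + y + z ≤ (ν1 : ℝ) + (ν2 : ℝ) - (a1 : ℝ)) ∧
  -- (9)
  (max (ν2 : ℝ) (μ2 : ℝ) - (a2 : ℝ) ≤ x - y + z ∧
      x - y + z ≤ (ν1 : ℝ) + (ν2 : ℝ) - (a2 : ℝ)) ∧
  -- (10)
  (max (ν2 : ℝ) (μ2 : ℝ) - (a3 : ℝ) ≤ x + y - z ∧
      x + y - z ≤ (ν1 : ℝ) + (ν2 : ℝ) - (a3 : ℝ))

lemma InP_toZ (μ1 μ2 ν1 ν2 ν3 a1 a2 a3 p q r : ℤ)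
    (h : InP μ1 μ2 ν1 ν2 ν3 a1 a2 a3 ((p : ℝ) / 2) ((q : ℝ) / 2) ((r : ℝ) / 2)) :
    InPZ μ1 μ2 ν1 ν2 ν3 a1 a2 a3 p q r := by
  obtain ⟨⟨h1l, h1u⟩, ⟨h2l, h2u⟩, ⟨h3l, h3u⟩, h4, h5, h6, h7,
    ⟨h8l, h8u⟩, ⟨h9l, h9u⟩, ⟨h10l, h10u⟩⟩ := h
  have m11 := min_le_left (ν2:ℝ) (min (μ2:ℝ) ((a1:ℝ)/2))
  have m12 := min_le_right (ν2:ℝ) (min (μ2:ℝ) ((a1:ℝ)/2))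
  have m13 := min_le_left (μ2:ℝ) ((a1:ℝ)/2)
  have m14 := min_le_right (μ2:ℝ) ((a1:ℝ)/2)
  have m21 := min_le_left (ν2:ℝ) (min (μ2:ℝ) ((a2:ℝ)/2))
  have m22 := min_le_right (ν2:ℝ) (min (μ2:ℝ) ((a2:ℝ)/2))
  have m23 := min_le_left (μ2:ℝ) ((a2:ℝ)/2)
  have m24 := min_le_right (μ2:ℝ) ((a2:ℝ)/2)
  have m31 := min_le_left (ν2:ℝ) (min (μ2:ℝ) ((a3:ℝ)/2))
  have m32 := min_le_right (ν2:ℝ) (min (μ2:ℝ) ((a3:ℝ)/2))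
  have m33 := min_le_left (μ2:ℝ) ((a3:ℝ)/2)
  have m34 := min_le_right (μ2:ℝ) ((a3:ℝ)/2)
  have u11 := min_le_left (a1:ℝ) (ν1:ℝ)
  have u12 := min_le_right (a1:ℝ) (ν1:ℝ)
  have u21 := min_le_left (a2:ℝ) (ν1:ℝ)
  have u22 := min_le_right (a2:ℝ) (ν1:ℝ)
  have u31 := min_le_left (a3:ℝ) (ν1:ℝ)
  have u32 := min_le_right (a3:ℝ) (ν1:ℝ)
  have x41 := le_max_left (ν3:ℝ) ((a1:ℝ) + (a2:ℝ) - (ν1:ℝ))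
  have x42 := le_max_right (ν3:ℝ) ((a1:ℝ) + (a2:ℝ) - (ν1:ℝ))
  have x51 := le_max_left (ν3:ℝ) ((a1:ℝ) + (a3:ℝ) - (ν1:ℝ))
  have x52 := le_max_right (ν3:ℝ) ((a1:ℝ) + (a3:ℝ) - (ν1:ℝ))
  have x61 := le_max_left (ν3:ℝ) ((a2:ℝ) + (a3:ℝ) - (ν1:ℝ))
  have x62 := le_max_right (ν3:ℝ) ((a2:ℝ) + (a3:ℝ) - (ν1:ℝ))
  have x81 := le_max_left (ν2:ℝ) (μ2:ℝ)
  have x82 := le_max_right (ν2:ℝ) (μ2:ℝ)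
  refine ⟨⟨?_,?_,?_,?_,?_⟩,⟨?_,?_,?_,?_,?_⟩,⟨?_,?_,?_,?_,?_⟩,⟨?_,?_⟩,⟨?_,?_⟩,⟨?_,?_⟩,
    ?_,⟨?_,?_,?_⟩,⟨?_,?_,?_⟩,⟨?_,?_,?_⟩⟩ <;> (rify; linarith)

lemma InP_ofZ (μ1 μ2 ν1 ν2 ν3 a1 a2 a3 u v w : ℤ)
    (h : InPZ μ1 μ2 ν1 ν2 ν3 a1 a2 a3 (2*u) (2*v) (2*w)) :
    InP μ1 μ2 ν1 ν2 ν3 a1 a2 a3 (u : ℝ) (v : ℝ) (w : ℝ) := by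
  obtain ⟨⟨g1, g2, g3, g4, g5⟩, ⟨g6, g7, g8, g9, g10⟩, ⟨g11, g12, g13, g14, g15⟩,
    ⟨g16, g17⟩, ⟨g18, g19⟩, ⟨g20, g21⟩, g22, ⟨g23, g24, g25⟩, ⟨g26, g27, g28⟩,
    ⟨g29, g30, g31⟩⟩ := h
  rify at g1 g2 g3 g4 g5 g6 g7 g8 g9 g10 g11 g12 g13 g14 g15 g16 g17 g18 g19 g20 g21 g22 g23 g24 g25 g26 g27 g28 g29 g30 g31
  refine ⟨⟨?_, ?_⟩, ⟨?_, ?_⟩, ⟨?_, ?_⟩, ?_, ?_, ?_, ?_, ⟨?_, ?_⟩, ⟨?_, ?_⟩, ⟨?_, ?_⟩⟩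
  · have : (a1:ℝ) - u ≤ min (ν2:ℝ) (min (μ2:ℝ) ((a1:ℝ)/2)) :=
      le_min (by linarith) (le_min (by linarith) (by linarith))
    linarith
  · exact le_min (by linarith) (by linarith)
  · have : (a2:ℝ) - v ≤ min (ν2:ℝ) (min (μ2:ℝ) ((a2:ℝ)/2)) :=
      le_min (by linarith) (le_min (by linarith) (by linarith))
    linarith
  · exact le_min (by linarith) (by linarith)
  · have : (a3:ℝ) - w ≤ min (ν2:ℝ) (min (μ2:ℝ) ((a3:ℝ)/2)) :=
      le_min (by linarith) (le_min (by linarith) (by linarith))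
    linarith
  · exact le_min (by linarith) (by linarith)
  · exact max_le (by linarith) (by linarith)
  · exact max_le (by linarith) (by linarith)
  · exact max_le (by linarith) (by linarith)
  · linarith
  · have : max (ν2:ℝ) (μ2:ℝ) ≤ (-(u:ℝ) + v + w) + a1 := max_le (by linarith) (by linarith)
    linarith
  · linarith
  · have : max (ν2:ℝ) (μ2:ℝ) ≤ ((u:ℝ) - v + w) + a2 := max_le (by linarith) (by linarith)
    linarith
  · linarith
  · have : max (ν2:ℝ) (μ2:ℝ) ≤ ((u:ℝ) + v - w) + a3 := max_le (by linarith) (by linarith)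
    linarith
  · linarith

/-- With integer data: `μ` a two-row partition and `ν` a three-row
partition of `n` with `ν₁ < μ₁`, and `a` a composition of `n` into three nonnegative
parts, if `𝒫(μ,ν;a)` contains a point all of whose coordinates lie in `(1/2)ℤ`, then it
contains a point with all coordinates in `ℤ`. -/
theorem half_integer_to_integer_point (n μ1 μ2 ν1 ν2 ν3 a1 a2 a3 : ℤ)
    (hμ : μ1 ≥ μ2 ∧ μ2 ≥ 0 ∧ μ1 + μ2 = n)
    (hν : ν1 ≥ ν2 ∧ ν2 ≥ ν3 ∧ ν3 ≥ 0 ∧ ν1 + ν2 + ν3 = n)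
    (ha : a1 ≥ 0 ∧ a2 ≥ 0 ∧ a3 ≥ 0 ∧ a1 + a2 + a3 = n)
    (hνμ : ν1 < μ1)
    (h : ∃ p q r : ℤ,
      InP μ1 μ2 ν1 ν2 ν3 a1 a2 a3 ((p : ℝ) / 2) ((q : ℝ) / 2) ((r : ℝ) / 2)) :
    ∃ u v w : ℤ, InP μ1 μ2 ν1 ν2 ν3 a1 a2 a3 (u : ℝ) (v : ℝ) (w : ℝ) := by
  obtain ⟨p, q, r, hp⟩ := h
  obtain ⟨u, v, w, hw⟩ := keyZ n μ1 μ2 ν1 ν2 ν3 a1 a2 a3 p q r hμ hν ha hνμ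
    (InP_toZ μ1 μ2 ν1 ν2 ν3 a1 a2 a3 p q r hp)
  exact ⟨u, v, w, InP_ofZ μ1 μ2 ν1 ν2 ν3 a1 a2 a3 u v w hw⟩
end
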